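/- arXiv:1109.4371 — 8 statements merged into one kernel-verified Lean document; each statement's English description precedes it below -/
import Mathlib

section
/- Let U be a positive definite real p×p matrix, let L ∈ ℒ_𝒟, and let D be a p×p diagonal matrix with nonzero diagonal entries. Then tr(L D^{-1} Lᵀ U) = Σ_{i=1}^p D_{ii}^{-1} [ (L_{<i|} + (U_{<i>})^{-1} U_{<i|})ᵀ U_{<i>} (L_{<i|} + (U_{<i>})^{-1} U_{<i|}) + U_{ii|<i>} ], where for indices i with pa(i) = ∅ the quadratic-form term is 0 and U_{ii|<i>} = U_{ii}. -/
open MeasureTheory Matrix Real Finset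

noncomputable section

/-- Index type for the free coordinates of a lower triangular matrix `L ∈ ℒ_𝒟`:
a pair of a vertex `i` and a parent `j ∈ pa i`, standing for the entry `L j i`. -/
abbrev Edges {p : ℕ} (pa : Fin p → Finset (Fin p)) : Type := Σ i : Fin p, {j // j ∈ pa i}

/-- The matrix `L ∈ ℒ_𝒟` built from its free coordinates. -/
def mkL {p : ℕ} (pa : Fin p → Finset (Fin p)) (y : Edges pa → ℝ) :
    Matrix (Fin p) (Fin p) ℝ :=
  Matrix.of fun j i => if j = i then 1 else if h : j ∈ pa i then y ⟨i, j, h⟩ else 0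

/-- `A_{<i>}`, the `pa(i) × pa(i)` submatrix of `A`. -/
def sub2 {p : ℕ} (pa : Fin p → Finset (Fin p)) (A : Matrix (Fin p) (Fin p) ℝ) (i : Fin p) :
    Matrix {j // j ∈ pa i} {j // j ∈ pa i} ℝ :=
  A.submatrix (fun j => j.1) (fun j => j.1)

/-- `A_{<i|}`, the column vector `(A_{ji})_{j ∈ pa(i)}`. -/
def colv {p : ℕ} (pa : Fin p → Finset (Fin p)) (A : Matrix (Fin p) (Fin p) ℝ) (i : Fin p) :
    {j // j ∈ pa i} → ℝ :=
  fun j => A j.1 i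

/-- `A_{[i>}`, the row vector `(A_{ij})_{j ∈ pa(i)}`. -/
def rowv {p : ℕ} (pa : Fin p → Finset (Fin p)) (A : Matrix (Fin p) (Fin p) ℝ) (i : Fin p) :
    {j // j ∈ pa i} → ℝ :=
  fun j => A i j.1

/-- `A_{≤i≥}`, the `fa(i) × fa(i)` submatrix of `A`. -/
def subFam {p : ℕ} (pa : Fin p → Finset (Fin p)) (A : Matrix (Fin p) (Fin p) ℝ) (i : Fin p) :
    Matrix {j // j ∈ insert i (pa i)} {j // j ∈ insert i (pa i)} ℝ :=
  A.submatrix (fun j => j.1) (fun j => j.1)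

/-- `A_{ii|<i>} = A_{ii} - A_{[i>} (A_{<i>})⁻¹ A_{<i|}` (equal to `A_{ii}` when `pa(i) = ∅`). -/
def condVar {p : ℕ} (pa : Fin p → Finset (Fin p)) (A : Matrix (Fin p) (Fin p) ℝ) (i : Fin p) :
    ℝ :=
  A i i - rowv pa A i ⬝ᵥ ((sub2 pa A i)⁻¹ *ᵥ colv pa A i)

/-- The normalizing constant `z_𝒟(U, α)`. -/
def zD {p : ℕ} (pa : Fin p → Finset (Fin p)) (U : Matrix (Fin p) (Fin p) ℝ)
    (α : Fin p → ℝ) : ℝ :=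
  ∏ i : Fin p,
    Real.Gamma (α i / 2 - ((pa i).card : ℝ) / 2 - 1) * (2 : ℝ) ^ (α i / 2 - 1) *
        Real.pi ^ (((pa i).card : ℝ) / 2) *
        (sub2 pa U i).det ^ (α i / 2 - ((pa i).card : ℝ) / 2 - 3 / 2) /
      (subFam pa U i).det ^ (α i / 2 - ((pa i).card : ℝ) / 2 - 1)

/-- The unnormalized DAG-Wishart density on the Cholesky space `Θ_𝒟`. -/
def dagDensity {p : ℕ} (pa : Fin p → Finset (Fin p)) (U : Matrix (Fin p) (Fin p) ℝ)
    (α : Fin p → ℝ) (d : Fin p → ℝ) (L : Matrix (Fin p) (Fin p) ℝ) : ℝ :=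
  Real.exp (-(1 / 2) * ((L * Matrix.diagonal (fun i => (d i)⁻¹) * Lᵀ) * U).trace) *
    ∏ i : Fin p, d i ^ (-(α i) / 2)

/-- The Cholesky space `Θ_𝒟` in free coordinates: diagonal coordinates positive. -/
def thetaSet {p : ℕ} (pa : Fin p → Finset (Fin p)) :
    Set ((Fin p → ℝ) × (Edges pa → ℝ)) :=
  {x | ∀ i, 0 < x.1 i}

/-- The DAG-Wishart distribution `π_{U,α}^{Θ_𝒟}` as a measure on the free coordinates. -/
def dagWishart {p : ℕ} (pa : Fin p → Finset (Fin p)) (U : Matrix (Fin p) (Fin p) ℝ)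
    (α : Fin p → ℝ) : Measure ((Fin p → ℝ) × (Edges pa → ℝ)) :=
  (volume.restrict (thetaSet pa)).withDensity
    (fun x => ENNReal.ofReal ((zD pa U α)⁻¹ * dagDensity pa U α x.1 (mkL pa x.2)))

/-!
By cyclicity of the trace, `tr(L D⁻¹ Lᵀ U) = tr(D⁻¹ (Lᵀ U L)) = ∑ᵢ D_ii⁻¹ cᵢᵀ U cᵢ` with `cᵢ` the
`i`-th column of `L`. Since `L ∈ ℒ_𝒟`, `cᵢ` is `eᵢ` plus a vector supported on `pa(i)`, so
`cᵢᵀ U cᵢ = U_ii + 2 L_{<i|}ᵀ U_{<i|} + L_{<i|}ᵀ U_{<i>} L_{<i|}`, and completing the square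
in `U_{<i>}` turns this into the `i`-th summand.
-/

namespace Matrix

variable {n m R : Type*} [Fintype n] [Fintype m]

theorem trace_mul_diagonal_mul_transpose_mul [CommSemiring R] [DecidableEq n] (L U : Matrix n n R)
    (w : n → R) : (L * diagonal w * Lᵀ * U).trace = ∑ j, w j * (Lᵀ j ⬝ᵥ (U *ᵥ Lᵀ j)) := by
  rw [Matrix.mul_assoc, Matrix.mul_assoc, trace_mul_comm, Matrix.mul_assoc, trace]
  refine Finset.sum_congr rfl fun j _ => ?_
  rw [diag_apply, diagonal_mul, dotProduct_mulVec, dotProduct, mul_apply]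
  rfl

theorem dotProduct_eq_of_support_subset [NonUnitalNonAssocSemiring R] {s : Finset n} {x : n → R}
    (hx : ∀ j ∉ s, x j = 0) (y : n → R) :
    x ⬝ᵥ y = (fun j : s => x j) ⬝ᵥ (fun j : s => y j) := by
  rw [dotProduct, dotProduct, Finset.sum_coe_sort s (fun j => x j * y j)]
  exact (Finset.sum_subset (Finset.subset_univ s) fun j _ hj => by simp [hx j hj]).symm

theorem dotProduct_mulVec_eq_submatrix_of_support_subset [CommSemiring R] {s : Finset n}
    {x : n → R} (hx : ∀ j ∉ s, x j = 0) (U : Matrix n n R) :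
    x ⬝ᵥ (U *ᵥ x) = (fun j : s => x j) ⬝ᵥ
      (U.submatrix Subtype.val Subtype.val *ᵥ fun j : s => x j) := by
  rw [dotProduct_eq_of_support_subset hx]
  congr 1
  funext a
  rw [mulVec, dotProduct_comm, dotProduct_eq_of_support_subset hx, dotProduct_comm]
  rfl

theorem IsSymm.dotProduct_mulVec_comm [CommSemiring R] {U : Matrix n n R} (hU : U.IsSymm)
    (x y : n → R) : x ⬝ᵥ (U *ᵥ y) = y ⬝ᵥ (U *ᵥ x) := by
  rw [dotProduct_mulVec, ← mulVec_transpose, hU.eq, dotProduct_comm]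

theorem IsSymm.dotProduct_mulVec_add_inv_mulVec [CommRing R] [DecidableEq m] {S : Matrix m m R}
    (hS : S.IsSymm) (hdet : IsUnit S.det) (x u : m → R) :
    (x + S⁻¹ *ᵥ u) ⬝ᵥ (S *ᵥ (x + S⁻¹ *ᵥ u)) =
      x ⬝ᵥ (S *ᵥ x) + 2 * (x ⬝ᵥ u) + u ⬝ᵥ (S⁻¹ *ᵥ u) := by
  have hSu : S *ᵥ (S⁻¹ *ᵥ u) = u := by
    rw [mulVec_mulVec, mul_nonsing_inv _ hdet, one_mulVec]
  rw [mulVec_add, hSu, dotProduct_add, add_dotProduct, add_dotProduct,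
    hS.dotProduct_mulVec_comm (S⁻¹ *ᵥ u), hSu, dotProduct_comm (S⁻¹ *ᵥ u) u]
  ring

theorem IsSymm.dotProduct_mulVec_of_support_subset_insert [CommSemiring R] [DecidableEq n]
    {U : Matrix n n R} (hU : U.IsSymm) {s : Finset n} {i : n} (hi : i ∉ s) {c : n → R}
    (hci : c i = 1) (hc : ∀ j ∉ insert i s, c j = 0) :
    c ⬝ᵥ (U *ᵥ c) = (fun j : s => c j) ⬝ᵥ
        (U.submatrix Subtype.val Subtype.val *ᵥ fun j : s => c j) +
      2 * ((fun j : s => c j) ⬝ᵥ fun j : s => U j i) + U i i := by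
  set r := Function.update c i 0
  have hr : ∀ j ∉ s, r j = 0 := fun j hj => by
    by_cases hji : j = i
    · simp [r, hji]
    · simp [r, hji, hc j (by simp [hji, hj])]
  have hrs : (fun j : s => r j) = fun j : s => c j :=
    funext fun j => Function.update_of_ne (ne_of_mem_of_not_mem j.2 hi) _ _
  have hcr : c = r + Pi.single i 1 := by
    ext j
    by_cases hji : j = i <;> simp [r, hji, hci]
  conv_lhs => rw [hcr]
  rw [mulVec_add, dotProduct_add, add_dotProduct, add_dotProduct,
    hU.dotProduct_mulVec_comm (Pi.single i 1) r, mulVec_single_one, single_one_dotProduct,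
    dotProduct_mulVec_eq_submatrix_of_support_subset hr,
    dotProduct_eq_of_support_subset hr]
  simp only [hrs, col_apply]
  ring

end Matrix

theorem stmt2_general {p : ℕ} (pa : Fin p → Finset (Fin p))
    (hpa : ∀ i : Fin p, ∀ j ∈ pa i, i < j)
    (U : Matrix (Fin p) (Fin p) ℝ) (hU : U.PosDef)
    (L : Matrix (Fin p) (Fin p) ℝ) (hL1 : ∀ i, L i i = 1)
    (hL0 : ∀ i j : Fin p, j ≠ i → j ∉ pa i → L j i = 0)
    (d : Fin p → ℝ) :
    ((L * Matrix.diagonal (fun i => (d i)⁻¹) * Lᵀ) * U).trace =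
      ∑ i : Fin p, (d i)⁻¹ *
        ((colv pa L i + (sub2 pa U i)⁻¹ *ᵥ colv pa U i) ⬝ᵥ
            (sub2 pa U i *ᵥ (colv pa L i + (sub2 pa U i)⁻¹ *ᵥ colv pa U i)) +
          condVar pa U i) := by
  have hUsymm : U.IsSymm := isHermitian_iff_isSymm.mp hU.isHermitian
  rw [trace_mul_diagonal_mul_transpose_mul]
  refine Finset.sum_congr rfl fun i _ => congrArg _ ?_
  have hS : (sub2 pa U i).PosDef := hU.submatrix Subtype.val_injective
  have hrow : rowv pa U i = colv pa U i := funext fun j => (hUsymm.apply i j).symm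
  have hcol : Lᵀ i ⬝ᵥ (U *ᵥ Lᵀ i) = colv pa L i ⬝ᵥ (sub2 pa U i *ᵥ colv pa L i) +
      2 * (colv pa L i ⬝ᵥ colv pa U i) + U i i :=
    hUsymm.dotProduct_mulVec_of_support_subset_insert (fun h => (hpa i i h).false) (hL1 i)
      fun j hj => hL0 i j (fun h => hj (by simp [h])) fun h => hj (by simp [h])
  rw [hcol, (isHermitian_iff_isSymm.mp hS.isHermitian).dotProduct_mulVec_add_inv_mulVec
    hS.det_pos.ne'.isUnit, condVar, hrow]
  ring

/-- decomposition of `tr(L D⁻¹ Lᵀ U)` over vertices. -/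
theorem stmt2 {p : ℕ} (hp : 1 ≤ p) (pa : Fin p → Finset (Fin p))
    (hpa : ∀ i : Fin p, ∀ j ∈ pa i, i < j)
    (U : Matrix (Fin p) (Fin p) ℝ) (hU : U.PosDef)
    (L : Matrix (Fin p) (Fin p) ℝ) (hL1 : ∀ i, L i i = 1)
    (hL0 : ∀ i j : Fin p, j ≠ i → j ∉ pa i → L j i = 0)
    (d : Fin p → ℝ) (hd : ∀ i, d i ≠ 0) :
    ((L * Matrix.diagonal (fun i => (d i)⁻¹) * Lᵀ) * U).trace =
      ∑ i : Fin p, (d i)⁻¹ *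
        ((colv pa L i + (sub2 pa U i)⁻¹ *ᵥ colv pa U i) ⬝ᵥ
            (sub2 pa U i *ᵥ (colv pa L i + (sub2 pa U i)⁻¹ *ᵥ colv pa U i)) +
          condVar pa U i) :=
  stmt2_general pa hpa U hU L hL1 hL0 d

end
end

section
/- Let U be positive definite and α ∈ ℝ^p with α_i > pa_i + 2 for every i. For every (D, L) ∈ Θ_𝒟, the DAG-Wishart density factorizes as z_𝒟(U, α)^{-1} exp(−(1/2) tr(L D^{-1} Lᵀ U)) ∏_{i=1}^p D_{ii}^{−α_i/2} = ∏_{i=1}^p f_i(D_{ii}) · g_i(L_{<i|}; D_{ii}), where, with ν_i = α_i/2 − pa_i/2 − 1, f_i(λ) = (U_{ii|<i>}/2)^{ν_i} Γ(ν_i)^{-1} λ^{−ν_i − 1} exp(−U_{ii|<i>}/(2λ)) is the inverse-Gamma(ν_i, U_{ii|<i>}/2) density, and g_i(x; λ) = (2πλ)^{−pa_i/2} det(U_{<i>})^{1/2} exp( −(1/(2λ)) (x + (U_{<i>})^{-1} U_{<i|})ᵀ U_{<i>} (x + (U_{<i>})^{-1} U_{<i|}) ) is the N_{pa_i}(−(U_{<i>})^{-1}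 U_{<i|}, λ (U_{<i>})^{-1}) density, with g_i ≡ 1 when pa(i) = ∅. In particular, under π_{U,α}^{Θ_𝒟} the blocks (D_{ii}, L_{<i|}), i = 1,…,p, are mutually independent, each D_{ii} is inverse-Gamma distributed and each L_{<i|} given D_{ii} is Gaussian as specified. -/
open MeasureTheory Matrix Real Finset

noncomputable section

/-! The trace splits over vertices, `tr(L D⁻¹ Lᵀ U) = ∑ᵢ D_ii⁻¹ (Lᵀ U L)_ii`, and since column `i`
of `L` is `eᵢ + L_{<i|}`, `(Lᵀ U L)_ii = U_ii + 2 L_{<i|}ᵀ U_{<i|} + L_{<i|}ᵀ U_{<i>} L_{<i|}`.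
Completing the square rewrites this as `U_{ii|<i>}` plus the Gaussian quadratic form, and the
Schur complement formula `det U_{≤i≥} = det U_{<i>} · U_{ii|<i>}` splits each factor of `z_𝒟`
into the inverse-Gamma and Gaussian normalizing constants. -/

theorem Matrix.trace_mul_diagonal_mul_transpose_mul_s4 {n : Type*} [Fintype n] [DecidableEq n]
    (L U : Matrix n n ℝ) (w : n → ℝ) :
    (L * diagonal w * Lᵀ * U).trace = ∑ a, w a * (Lᵀ * U * L) a a := by
  rw [Matrix.mul_assoc, Matrix.mul_assoc, trace_mul_comm, Matrix.mul_assoc]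
  simp only [trace, diag_apply, diagonal_mul, Matrix.mul_assoc]

theorem Matrix.add_two_mul_dotProduct_add_dotProduct_mulVec_eq {n : Type*} [Fintype n]
    [DecidableEq n] {S : Matrix n n ℝ} (hS : S.IsSymm) (hdet : IsUnit S.det)
    (u : ℝ) (x c : n → ℝ) :
    u + 2 * (x ⬝ᵥ c) + x ⬝ᵥ S *ᵥ x =
      (u - c ⬝ᵥ S⁻¹ *ᵥ c) + (x + S⁻¹ *ᵥ c) ⬝ᵥ S *ᵥ (x + S⁻¹ *ᵥ c) := by
  have hSS : S *ᵥ (S⁻¹ *ᵥ c) = c := by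
    rw [mulVec_mulVec, mul_nonsing_inv _ hdet, one_mulVec]
  have hsym : ∀ v w : n → ℝ, v ⬝ᵥ S *ᵥ w = w ⬝ᵥ S *ᵥ v := fun v w => by
    rw [dotProduct_mulVec, ← mulVec_transpose, hS.eq, dotProduct_comm]
  rw [mulVec_add, hSS, dotProduct_add, add_dotProduct, add_dotProduct, hsym (S⁻¹ *ᵥ c) x, hSS,
    dotProduct_comm (S⁻¹ *ᵥ c) c]
  ring

theorem det_subFam_eq_det_sub2_mul_condVar {p : ℕ} (pa : Fin p → Finset (Fin p))
    (A : Matrix (Fin p) (Fin p) ℝ) {i : Fin p} (hi : i ∉ pa i) (hdet : IsUnit (sub2 pa A i).det) :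
    (subFam pa A i).det = (sub2 pa A i).det * condVar pa A i := by
  let e : {j // j ∈ pa i} ⊕ PUnit.{1} ≃ {j // j ∈ insert i (pa i)} :=
    (Equiv.optionEquivSumPUnit _).symm.trans (Finset.subtypeInsertEquivOption hi).symm
  have hblock : (subFam pa A i).submatrix e e =
      fromBlocks (sub2 pa A i) (of fun j _ => A j.1 i) (of fun _ j => A i j.1)
        (of fun _ _ => A i i) := by
    ext (j | j) (k | k) <;> rfl
  have : Invertible (sub2 pa A i) := invertibleOfIsUnitDet _ hdet
  rw [← det_submatrix_equiv_self e, hblock, det_fromBlocks₁₁, invOf_eq_nonsing_inv]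
  congr 1
  rw [det_unique]
  simp only [condVar, Matrix.mul_assoc, Matrix.sub_apply, mul_apply, of_apply, dotProduct, mulVec,
    rowv, colv, Finset.mul_sum]

theorem sum_mkL_mul {p : ℕ} (pa : Fin p → Finset (Fin p)) (y : Edges pa → ℝ) {a : Fin p}
    (ha : a ∉ pa a) (f : Fin p → ℝ) :
    ∑ j, mkL pa y j a * f j = f a + colv pa (mkL pa y) a ⬝ᵥ fun j => f j.1 := by
  have hzero : ∀ j ∉ insert a (pa a), mkL pa y j a * f j = 0 := fun j hj => by
    rw [Finset.mem_insert, not_or] at hj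
    simp [mkL, hj.1, hj.2]
  rw [← Finset.sum_subset (Finset.subset_univ _) fun j _ hj => hzero j hj, Finset.sum_insert ha,
    dotProduct, ← Finset.sum_coe_sort (pa a)]
  simp [mkL, colv]

theorem transpose_mkL_mul_mul_mkL_apply_self {p : ℕ} (pa : Fin p → Finset (Fin p))
    (y : Edges pa → ℝ) {A : Matrix (Fin p) (Fin p) ℝ} (hA : A.IsSymm) {a : Fin p}
    (ha : a ∉ pa a) :
    ((mkL pa y)ᵀ * A * mkL pa y) a a =
      A a a + 2 * (colv pa (mkL pa y) a ⬝ᵥ colv pa A a) +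
        colv pa (mkL pa y) a ⬝ᵥ sub2 pa A a *ᵥ colv pa (mkL pa y) a := by
  have hAL : ∀ j, (A * mkL pa y) j a = A j a + colv pa (mkL pa y) a ⬝ᵥ fun k => A j k.1 :=
    fun j => by
      rw [mul_apply, ← sum_mkL_mul pa y ha]
      exact Finset.sum_congr rfl fun _ _ => mul_comm _ _
  rw [Matrix.mul_assoc, mul_apply]
  simp only [transpose_apply, hAL]
  have hrow : (fun k : {k // k ∈ pa a} => A a k) = colv pa A a :=
    funext fun k => (hA.apply a k).symm
  have hcol : (fun j : {j // j ∈ pa a} => A j a + colv pa (mkL pa y) a ⬝ᵥ fun k => A j k) =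
      colv pa A a + sub2 pa A a *ᵥ colv pa (mkL pa y) a :=
    funext fun j => by rw [Pi.add_apply, mulVec, dotProduct_comm]; rfl
  rw [sum_mkL_mul pa y ha, hrow, hcol, dotProduct_add]
  ring

theorem transpose_mkL_mul_mul_mkL_apply_self_eq_condVar_add {p : ℕ}
    (pa : Fin p → Finset (Fin p)) (y : Edges pa → ℝ) {A : Matrix (Fin p) (Fin p) ℝ}
    (hA : A.IsSymm) {a : Fin p} (ha : a ∉ pa a) (hdet : IsUnit (sub2 pa A a).det) :
    ((mkL pa y)ᵀ * A * mkL pa y) a a =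
      condVar pa A a +
        (colv pa (mkL pa y) a + (sub2 pa A a)⁻¹ *ᵥ colv pa A a) ⬝ᵥ
          sub2 pa A a *ᵥ (colv pa (mkL pa y) a + (sub2 pa A a)⁻¹ *ᵥ colv pa A a) := by
  have hrow : rowv pa A a = colv pa A a := funext fun k => (hA.apply a k).symm
  rw [transpose_mkL_mul_mul_mkL_apply_self pa y hA ha,
    add_two_mul_dotProduct_add_dotProduct_mulVec_eq
      (S := sub2 pa A a) (hA.submatrix _) hdet, condVar, hrow]

theorem condVar_pos {p : ℕ} (pa : Fin p → Finset (Fin p)) {A : Matrix (Fin p) (Fin p) ℝ}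
    (hA : A.PosDef) {i : Fin p} (hi : i ∉ pa i) : 0 < condVar pa A i := by
  have hS : 0 < (sub2 pa A i).det := (hA.submatrix Subtype.val_injective).det_pos
  have hF : 0 < (subFam pa A i).det := (hA.submatrix Subtype.val_injective).det_pos
  rw [det_subFam_eq_det_sub2_mul_condVar pa A hi hS.ne'.isUnit] at hF
  exact pos_of_mul_pos_right hF hS.le

theorem inverseGamma_mul_gaussian_eq (α k d c S Q : ℝ) (hd : 0 < d) (hc : 0 < c) (hS : 0 < S)
    (hν : 0 < α / 2 - k / 2 - 1) :
    (Real.Gamma (α / 2 - k / 2 - 1) * (2 : ℝ) ^ (α / 2 - 1) * Real.pi ^ (k / 2) *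
        S ^ (α / 2 - k / 2 - 3 / 2) / (S * c) ^ (α / 2 - k / 2 - 1))⁻¹ *
      (Real.exp (-(1 / 2) * (d⁻¹ * (c + Q))) * d ^ (-α / 2)) =
    ((c / 2) ^ (α / 2 - k / 2 - 1) / Real.Gamma (α / 2 - k / 2 - 1) *
        d ^ (-(α / 2 - k / 2 - 1) - 1) * Real.exp (-c / (2 * d))) *
      ((2 * Real.pi * d) ^ (-k / 2) * S ^ ((1 : ℝ) / 2) *
        Real.exp (-(1 / (2 * d)) * Q)) := by
  have hΓ : 0 < Real.Gamma (α / 2 - k / 2 - 1) := Real.Gamma_pos_of_pos hν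
  rw [rpow_def_of_pos two_pos, rpow_def_of_pos pi_pos, rpow_def_of_pos hS,
    rpow_def_of_pos (mul_pos hS hc), rpow_def_of_pos hd, rpow_def_of_pos (half_pos hc),
    rpow_def_of_pos hd, rpow_def_of_pos (by positivity : (0 : ℝ) < 2 * π * d),
    rpow_def_of_pos hS, ← exp_log hΓ, log_div hc.ne' two_ne_zero, log_mul hS.ne' hc.ne',
    log_mul (by positivity) hd.ne', log_mul two_ne_zero pi_pos.ne']
  simp only [div_eq_mul_inv, ← exp_add, ← exp_neg, exp_eq_exp]
  field_simp
  ring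

theorem stmt4_general {p : ℕ} (pa : Fin p → Finset (Fin p))
    (hpa : ∀ i : Fin p, ∀ j ∈ pa i, i < j)
    (U : Matrix (Fin p) (Fin p) ℝ) (hU : U.PosDef) (α : Fin p → ℝ)
    (hα : ∀ i : Fin p, α i > ((pa i).card : ℝ) + 2)
    (d : Fin p → ℝ) (hd : ∀ i, 0 < d i) (y : Edges pa → ℝ) :
    (zD pa U α)⁻¹ * dagDensity pa U α d (mkL pa y) =
      ∏ i : Fin p,
        ((condVar pa U i / 2) ^ (α i / 2 - ((pa i).card : ℝ) / 2 - 1) /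
            Real.Gamma (α i / 2 - ((pa i).card : ℝ) / 2 - 1) *
          d i ^ (-(α i / 2 - ((pa i).card : ℝ) / 2 - 1) - 1) *
          Real.exp (-condVar pa U i / (2 * d i))) *
        ((2 * Real.pi * d i) ^ (-((pa i).card : ℝ) / 2) * (sub2 pa U i).det ^ ((1 : ℝ) / 2) *
          Real.exp (-(1 / (2 * d i)) *
            ((colv pa (mkL pa y) i + (sub2 pa U i)⁻¹ *ᵥ colv pa U i) ⬝ᵥ
              (sub2 pa U i *ᵥ
                (colv pa (mkL pa y) i + (sub2 pa U i)⁻¹ *ᵥ colv pa U i))))) := by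
  have hUsymm : U.IsSymm := (conjTranspose_eq_transpose_of_trivial U).symm.trans hU.1
  have hi : ∀ i, i ∉ pa i := fun i h => lt_irrefl i (hpa i i h)
  unfold dagDensity zD
  rw [trace_mul_diagonal_mul_transpose_mul_s4, Finset.mul_sum, exp_sum, ← Finset.prod_inv_distrib,
    ← Finset.prod_mul_distrib, ← Finset.prod_mul_distrib]
  refine Finset.prod_congr rfl fun i _ => ?_
  have hS : 0 < (sub2 pa U i).det := (hU.submatrix Subtype.val_injective).det_pos
  rw [transpose_mkL_mul_mul_mkL_apply_self_eq_condVar_add pa y hUsymm (hi i) hS.ne'.isUnit,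
    det_subFam_eq_det_sub2_mul_condVar pa U (hi i) hS.ne'.isUnit]
  exact inverseGamma_mul_gaussian_eq _ _ _ _ _ _ (hd i) (condVar_pos pa hU (hi i)) hS
    (by linarith [hα i])

/-- pointwise factorization of the normalized DAG-Wishart density into
inverse-Gamma factors for the `D_{ii}` and Gaussian factors for the `L_{<i|}`. -/
theorem stmt4 {p : ℕ} (hp : 1 ≤ p) (pa : Fin p → Finset (Fin p))
    (hpa : ∀ i : Fin p, ∀ j ∈ pa i, i < j)
    (U : Matrix (Fin p) (Fin p) ℝ) (hU : U.PosDef) (α : Fin p → ℝ)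
    (hα : ∀ i : Fin p, α i > ((pa i).card : ℝ) + 2)
    (d : Fin p → ℝ) (hd : ∀ i, 0 < d i) (y : Edges pa → ℝ) :
    (zD pa U α)⁻¹ * dagDensity pa U α d (mkL pa y) =
      ∏ i : Fin p,
        ((condVar pa U i / 2) ^ (α i / 2 - ((pa i).card : ℝ) / 2 - 1) /
            Real.Gamma (α i / 2 - ((pa i).card : ℝ) / 2 - 1) *
          d i ^ (-(α i / 2 - ((pa i).card : ℝ) / 2 - 1) - 1) *
          Real.exp (-condVar pa U i / (2 * d i))) *
        ((2 * Real.pi * d i) ^ (-((pa i).card : ℝ) / 2) * (sub2 pa U i).det ^ ((1 : ℝ) / 2) *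
          Real.exp (-(1 / (2 * d i)) *
            ((colv pa (mkL pa y) i + (sub2 pa U i)⁻¹ *ᵥ colv pa U i) ⬝ᵥ
              (sub2 pa U i *ᵥ
                (colv pa (mkL pa y) i + (sub2 pa U i)⁻¹ *ᵥ colv pa U i))))) :=
  stmt4_general pa hpa U hU α hα d hd y

end
end

section
/- Let E = {(j, i) : j ∈ pa(i), 1 ≤ i ≤ p} ∪ {(i, i) : 1 ≤ i ≤ p}, and define ψ : Θ_𝒟 → ℝ^E by ψ(D, L) = ((L D^{-1} Lᵀ)_{ji})_{(j,i) ∈ E}. Then ψ is continuously differentiable on Θ_𝒟, and at every (D, L) ∈ Θ_𝒟 the absolute value of the determinant of the total derivative of ψ — computed with respect to the free coordinates (D_{ii})_{1≤i≤p} and (L_{ji})_{j∈pa(i)} on the domain, under the bijection matching the coordinate D_{ii} with the loop (i, i) and the coordinate L_{ji} with the edge (j, i) — equals ∏_{j=1}^p D_{jj}^{−(pa_j + 2)}. -/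
open MeasureTheory Matrix Real Finset

noncomputable section

/-- The map `ψ : Θ_𝒟 → ℝ^E`, `(D, L) ↦ ((L D⁻¹ Lᵀ)_{ji})_{(j,i) ∈ E}`, where the loop
`(i,i)` is indexed by `Sum.inl i` and the edge `(j,i)`, `j ∈ pa i`, by `Sum.inr ⟨i, j⟩`. -/
def psiMap {p : ℕ} (pa : Fin p → Finset (Fin p)) :
    ((Fin p → ℝ) × (Edges pa → ℝ)) → ((Fin p ⊕ Edges pa) → ℝ) :=
  fun x e =>
    match e with
    | Sum.inl i => (mkL pa x.2 * Matrix.diagonal (fun i => (x.1 i)⁻¹) * (mkL pa x.2)ᵀ) i i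
    | Sum.inr ⟨i, j⟩ => (mkL pa x.2 * Matrix.diagonal (fun i => (x.1 i)⁻¹) * (mkL pa x.2)ᵀ) j.1 i

/-!
Because `L` is lower triangular with unit diagonal, `(L D⁻¹ Lᵀ)_{ji}` is `L_{ji} / D_i` plus a
function of the columns `k < i` of `L` and `D` alone. Ordering the coordinates lexicographically
by (column, row), the Jacobian of `ψ` is therefore triangular, with diagonal entries `-D_i⁻²` at
the loops `(i,i)` and `D_i⁻¹` at the `pa_i` edges `(j,i)`, so its determinant is
`∏ᵢ -D_i^{-(pa_i + 2)}`.
-/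

theorem Matrix.det_of_blockTriangular_of_injective {m α R : Type*} [Fintype m] [DecidableEq m]
    [CommRing R] [LinearOrder α] {M : Matrix m m R} {b : m → α} (hb : Function.Injective b)
    (h : M.BlockTriangular b) : M.det = ∏ i, M i i := by
  let _ : LinearOrder m := LinearOrder.lift' b hb
  exact det_of_isUpperTriangular h

theorem LinearEquiv.sumArrowLequivProdArrow_single_inl {α β R M : Type*} [DecidableEq α]
    [DecidableEq β] [Semiring R] [AddCommMonoid M] [Module R M] (a : α) (c : M) :
    sumArrowLequivProdArrow α β R M (Pi.single (.inl a) c) = (Pi.single a c, 0) := by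
  ext <;> simp [Pi.single_apply]

theorem LinearEquiv.sumArrowLequivProdArrow_single_inr {α β R M : Type*} [DecidableEq α]
    [DecidableEq β] [Semiring R] [AddCommMonoid M] [Module R M] (b : β) (c : M) :
    sumArrowLequivProdArrow α β R M (Pi.single (.inr b) c) = (0, Pi.single b c) := by
  ext <;> simp [Pi.single_apply]

namespace DagCholesky

variable {p : ℕ} {pa : Fin p → Finset (Fin p)}

def row : Fin p ⊕ Edges pa → Fin p
  | .inl i => i
  | .inr g => g.2

def col : Fin p ⊕ Edges pa → Fin p
  | .inl i => i
  | .inr g => g.1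

theorem col_le_row (hpa : ∀ i : Fin p, ∀ j ∈ pa i, i < j) (e : Fin p ⊕ Edges pa) :
    col e ≤ row e := by
  rcases e with i | ⟨i, j⟩
  exacts [le_rfl, (hpa i j j.2).le]

theorem injective_col_row (hpa : ∀ i : Fin p, ∀ j ∈ pa i, i < j) :
    Function.Injective fun e : Fin p ⊕ Edges pa => toLex (col e, row e) := by
  rintro (i | ⟨i, j⟩) (i' | ⟨i', j'⟩) h <;>
    simp only [toLex_inj, Prod.mk.injEq, col, row] at h
  · rw [h.1]
  · exact absurd (h.1.symm.trans h.2) (hpa i' j' j'.2).ne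
  · exact absurd (h.1.trans h.2.symm) (hpa i j j.2).ne
  · exact congrArg Sum.inr (Sigma.subtype_ext h.1 h.2)

def lowerCoord (a k : Fin p) : (Edges pa → ℝ) →L[ℝ] ℝ :=
  if h : a ≠ k ∧ a ∈ pa k then ContinuousLinearMap.proj ⟨k, a, h.2⟩ else 0

theorem mkL_apply_eq_one_add (y : Edges pa → ℝ) (a k : Fin p) :
    mkL pa y a k = (1 : Matrix (Fin p) (Fin p) ℝ) a k + lowerCoord a k y := by
  unfold mkL lowerCoord
  by_cases hak : a = k
  · subst hak
    simp
  · by_cases ha : a ∈ pa k <;> simp [hak, ha]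

theorem mkL_apply_self (y : Edges pa → ℝ) (k : Fin p) : mkL pa y k k = 1 := by
  simp [mkL]

theorem mkL_apply_of_lt (hpa : ∀ i : Fin p, ∀ j ∈ pa i, i < j) (y : Edges pa → ℝ)
    {a k : Fin p} (h : a < k) : mkL pa y a k = 0 := by
  have : a ∉ pa k := fun ha => (hpa k a ha).not_gt h
  simp [mkL, h.ne, this]

theorem lowerCoord_single (hpa : ∀ i : Fin p, ∀ j ∈ pa i, i < j) (a k : Fin p) (g : Edges pa) :
    lowerCoord a k (Pi.single g 1) = if k = g.1 ∧ a = g.2 then 1 else 0 := by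
  obtain ⟨m, j, hj⟩ := g
  unfold lowerCoord
  by_cases h : k = m ∧ a = j
  · obtain ⟨rfl, rfl⟩ := h
    simp [(hpa k a hj).ne', hj]
  · rw [if_neg h]
    split_ifs
    · exact Pi.single_eq_of_ne
        (fun hg => h ⟨congrArg Sigma.fst hg, congrArg (fun g : Edges pa => g.2.1) hg⟩) _
    · rfl

theorem psiMap_apply (x : (Fin p → ℝ) × (Edges pa → ℝ)) (e : Fin p ⊕ Edges pa) :
    psiMap pa x e = ∑ k, mkL pa x.2 (row e) k * (x.1 k)⁻¹ * mkL pa x.2 (col e) k := by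
  rcases e with i | ⟨i, j⟩ <;>
    simp [psiMap, row, col, Matrix.mul_apply, Matrix.diagonal_apply]

theorem contDiff_mkL_apply {n : WithTop ℕ∞} (a k : Fin p) :
    ContDiff ℝ n fun x : (Fin p → ℝ) × (Edges pa → ℝ) => mkL pa x.2 a k := by
  simp_rw [mkL_apply_eq_one_add]
  fun_prop

theorem contDiffAt_psiMap {n : WithTop ℕ∞} {x : (Fin p → ℝ) × (Edges pa → ℝ)}
    (hx : ∀ k, x.1 k ≠ 0) : ContDiffAt ℝ n (psiMap pa) x := by
  refine contDiffAt_pi.2 fun e => ?_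
  simp_rw [psiMap_apply]
  refine ContDiffAt.sum fun k _ => ?_
  refine ((contDiff_mkL_apply _ k).contDiffAt.mul ?_).mul (contDiff_mkL_apply _ k).contDiffAt
  exact (contDiff_apply ℝ ℝ k |>.comp contDiff_fst).contDiffAt.inv (hx k)

theorem hasFDerivAt_mkL_apply (a k : Fin p) (x : (Fin p → ℝ) × (Edges pa → ℝ)) :
    HasFDerivAt (fun x : (Fin p → ℝ) × (Edges pa → ℝ) => mkL pa x.2 a k)
      ((lowerCoord a k).comp (ContinuousLinearMap.snd ℝ _ _)) x := by
  simp_rw [mkL_apply_eq_one_add]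
  exact ((lowerCoord a k).hasFDerivAt.comp x hasFDerivAt_snd).const_add _

/-- Entry `(a, b)` of `dL D⁻¹ Lᵀ + L D⁻¹ dLᵀ - L D⁻² dD Lᵀ`, the derivative of `L D⁻¹ Lᵀ`. -/
def psiEntryDeriv (x : (Fin p → ℝ) × (Edges pa → ℝ)) (a b : Fin p) :
    ((Fin p → ℝ) × (Edges pa → ℝ)) →L[ℝ] ℝ :=
  ∑ k, (((x.1 k)⁻¹ * mkL pa x.2 b k) • (lowerCoord a k).comp (ContinuousLinearMap.snd ℝ _ _)
    + ((x.1 k)⁻¹ * mkL pa x.2 a k) • (lowerCoord b k).comp (ContinuousLinearMap.snd ℝ _ _)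
    - (mkL pa x.2 a k * mkL pa x.2 b k / x.1 k ^ 2) •
        (ContinuousLinearMap.proj k).comp (ContinuousLinearMap.fst ℝ _ _))

theorem hasFDerivAt_psiMap {x : (Fin p → ℝ) × (Edges pa → ℝ)} (hx : ∀ k, x.1 k ≠ 0) :
    HasFDerivAt (psiMap pa)
      (ContinuousLinearMap.pi fun e => psiEntryDeriv x (row e) (col e)) x := by
  refine hasFDerivAt_pi.2 fun e => ?_
  simp_rw [psiMap_apply]
  refine HasFDerivAt.fun_sum fun k _ => ?_
  have hcoord : HasFDerivAt (fun x : (Fin p → ℝ) × (Edges pa → ℝ) => x.1 k)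
      ((ContinuousLinearMap.proj k).comp (ContinuousLinearMap.fst ℝ _ _)) x :=
    ((ContinuousLinearMap.proj k).comp
      (ContinuousLinearMap.fst ℝ (Fin p → ℝ) (Edges pa → ℝ))).hasFDerivAt
  have hinv := (hasDerivAt_inv (hx k)).comp_hasFDerivAt x hcoord
  refine (((hasFDerivAt_mkL_apply _ k x).mul hinv).mul
    (hasFDerivAt_mkL_apply _ k x)).congr_fderiv (ContinuousLinearMap.ext fun v => ?_)
  simp only [_root_.add_apply, _root_.sub_apply, _root_.smul_apply, ContinuousLinearMap.comp_apply,
    ContinuousLinearMap.coe_fst', ContinuousLinearMap.coe_snd', ContinuousLinearMap.proj_apply,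
    Function.comp_apply, Pi.mul_apply, smul_eq_mul]
  ring

def jacobian (x : (Fin p → ℝ) × (Edges pa → ℝ)) :
    Matrix (Fin p ⊕ Edges pa) (Fin p ⊕ Edges pa) ℝ :=
  LinearMap.toMatrix' ((fderiv ℝ (psiMap pa) x).toLinearMap ∘ₗ
    (LinearEquiv.sumArrowLequivProdArrow (Fin p) (Edges pa) ℝ ℝ).toLinearMap)

theorem jacobian_apply {x : (Fin p → ℝ) × (Edges pa → ℝ)} (hx : ∀ k, x.1 k ≠ 0)
    (e f : Fin p ⊕ Edges pa) :
    jacobian x e f = psiEntryDeriv x (row e) (col e)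
      (LinearEquiv.sumArrowLequivProdArrow (Fin p) (Edges pa) ℝ ℝ (Pi.single f 1)) := by
  simp [jacobian, (hasFDerivAt_psiMap hx).fderiv]

theorem jacobian_apply_inl {x : (Fin p → ℝ) × (Edges pa → ℝ)} (hx : ∀ k, x.1 k ≠ 0)
    (e : Fin p ⊕ Edges pa) (m : Fin p) :
    jacobian x e (.inl m) = -(mkL pa x.2 (row e) m * mkL pa x.2 (col e) m / x.1 m ^ 2) := by
  rw [jacobian_apply hx]
  simp [psiEntryDeriv, LinearEquiv.sumArrowLequivProdArrow_single_inl, Pi.single_apply]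

theorem jacobian_apply_inr (hpa : ∀ i : Fin p, ∀ j ∈ pa i, i < j)
    {x : (Fin p → ℝ) × (Edges pa → ℝ)} (hx : ∀ k, x.1 k ≠ 0) (e : Fin p ⊕ Edges pa)
    (g : Edges pa) :
    jacobian x e (.inr g) = ((if row e = g.2 then mkL pa x.2 (col e) g.1 else 0)
      + (if col e = g.2 then mkL pa x.2 (row e) g.1 else 0)) / x.1 g.1 := by
  rw [jacobian_apply hx]
  simp [psiEntryDeriv, LinearEquiv.sumArrowLequivProdArrow_single_inr, lowerCoord_single hpa,
    ite_and, Finset.sum_add_distrib, div_eq_inv_mul, mul_add, mul_ite]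

theorem jacobian_blockTriangular (hpa : ∀ i : Fin p, ∀ j ∈ pa i, i < j)
    {x : (Fin p → ℝ) × (Edges pa → ℝ)} (hx : ∀ k, x.1 k ≠ 0) :
    (jacobian x).BlockTriangular fun e => OrderDual.toDual (toLex (col e, row e)) := by
  intro e f hlt
  have hlt' : toLex (col e, row e) < toLex (col f, row f) := hlt
  rcases f with m | ⟨m, j, hj⟩
  · obtain hc | ⟨hc, hr⟩ : col e < m ∨ col e = m ∧ row e < m := Prod.Lex.toLex_lt_toLex.1 hlt'
    · rw [jacobian_apply_inl hx, mkL_apply_of_lt hpa _ hc, mul_zero, zero_div, neg_zero]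
    · exact absurd (hc ▸ col_le_row hpa e) hr.not_ge
  · rw [jacobian_apply_inr hpa hx]
    obtain hc | ⟨hc, hr⟩ : col e < m ∨ col e = m ∧ row e < j := Prod.Lex.toLex_lt_toLex.1 hlt'
    · rw [mkL_apply_of_lt hpa _ hc, if_neg (hc.trans (hpa m j hj)).ne]
      simp
    · rw [if_neg hr.ne, if_neg (hc ▸ (hpa m j hj).ne)]
      simp

theorem jacobian_apply_inl_inl {x : (Fin p → ℝ) × (Edges pa → ℝ)} (hx : ∀ k, x.1 k ≠ 0)
    (m : Fin p) : jacobian x (.inl m) (.inl m) = -(x.1 m ^ 2)⁻¹ := by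
  simp [jacobian_apply_inl hx, row, col, mkL_apply_self]

theorem jacobian_apply_inr_inr (hpa : ∀ i : Fin p, ∀ j ∈ pa i, i < j)
    {x : (Fin p → ℝ) × (Edges pa → ℝ)} (hx : ∀ k, x.1 k ≠ 0) (g : Edges pa) :
    jacobian x (.inr g) (.inr g) = (x.1 g.1)⁻¹ := by
  simp [jacobian_apply_inr hpa hx, row, col, mkL_apply_self, (hpa _ _ g.2.2).ne]

theorem det_jacobian (hpa : ∀ i : Fin p, ∀ j ∈ pa i, i < j)
    {x : (Fin p → ℝ) × (Edges pa → ℝ)} (hx : ∀ k, x.1 k ≠ 0) :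
    (jacobian x).det = ∏ m, -(x.1 m ^ 2)⁻¹ * (x.1 m)⁻¹ ^ (pa m).card := by
  rw [Matrix.det_of_blockTriangular_of_injective
      (OrderDual.toDual.injective.comp (injective_col_row hpa)) (jacobian_blockTriangular hpa hx),
    Fintype.prod_sum_type, Fintype.prod_sigma, ← Finset.prod_mul_distrib]
  simp [jacobian_apply_inl_inl hx, jacobian_apply_inr_inr hpa hx]

end DagCholesky

theorem abs_neg_inv_sq_mul_inv_pow_eq_rpow {d : ℝ} (hd : 0 < d) (n : ℕ) :
    |-(d ^ 2)⁻¹ * d⁻¹ ^ n| = d ^ (-((n : ℝ) + 2)) := by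
  rw [abs_mul, abs_neg, abs_of_pos (by positivity), abs_of_pos (by positivity),
    Real.rpow_neg hd.le, show (n : ℝ) + 2 = (n + 2 : ℕ) by push_cast; ring, Real.rpow_natCast,
    pow_add, mul_inv, inv_pow, mul_comm]

theorem stmt8_general {p : ℕ} (pa : Fin p → Finset (Fin p))
    (hpa : ∀ i : Fin p, ∀ j ∈ pa i, i < j) :
    ContDiffOn ℝ 1 (psiMap pa) (thetaSet pa) ∧
    ∀ x ∈ thetaSet pa,
      |LinearMap.det ((fderiv ℝ (psiMap pa) x).toLinearMap ∘ₗ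
          (LinearEquiv.sumArrowLequivProdArrow (Fin p) (Edges pa) ℝ ℝ).toLinearMap)| =
        ∏ j : Fin p, x.1 j ^ (-(((pa j).card : ℝ) + 2)) := by
  have hne : ∀ x ∈ thetaSet pa, ∀ k, x.1 k ≠ 0 := fun x hx k => (hx k).ne'
  refine ⟨fun x hx => (DagCholesky.contDiffAt_psiMap (hne x hx)).contDiffWithinAt,
    fun x hx => ?_⟩
  rw [← LinearMap.det_toMatrix', ← DagCholesky.jacobian, DagCholesky.det_jacobian hpa (hne x hx),
    Finset.abs_prod]
  exact Finset.prod_congr rfl fun m _ => abs_neg_inv_sq_mul_inv_pow_eq_rpow (hx m) _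

/-- `ψ` is C¹ on `Θ_𝒟` and the absolute Jacobian determinant of `ψ`
(with the coordinate `D_{ii}` matched to the loop `(i,i)` and `L_{ji}` to the edge `(j,i)`)
equals `∏_j D_{jj}^{-(pa_j + 2)}`. -/
theorem stmt8 {p : ℕ} (hp : 1 ≤ p) (pa : Fin p → Finset (Fin p))
    (hpa : ∀ i : Fin p, ∀ j ∈ pa i, i < j) :
    ContDiffOn ℝ 1 (psiMap pa) (thetaSet pa) ∧
    ∀ x ∈ thetaSet pa,
      |LinearMap.det ((fderiv ℝ (psiMap pa) x).toLinearMap ∘ₗ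
          (LinearEquiv.sumArrowLequivProdArrow (Fin p) (Edges pa) ℝ ℝ).toLinearMap)| =
        ∏ j : Fin p, x.1 j ^ (-(((pa j).card : ℝ) + 2)) :=
  stmt8_general pa hpa
end
end

section
/- Suppose the DAG 𝒟 is homogeneous of type I or of type II, and let Σ ∈ PD_𝒟, i.e., Σ = (Lᵀ)^{-1} D L^{-1} for some (D, L) ∈ Θ_𝒟. Then ∏_{i=1}^p det(Σ_{<i>}) = ∏_{i=1}^p (Σ_{ii|<i>})^{ch_i(𝒟)}, where ch_i(𝒟) = |{j : i ∈ pa(j)}| is the number of children of i. -/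
open MeasureTheory Matrix Real Finset

noncomputable section

/-- The DAG is transitive: `i ∈ pa(j)` and `j ∈ pa(k)` imply `i ∈ pa(k)`. -/
def DagTransitive {p : ℕ} (pa : Fin p → Finset (Fin p)) : Prop :=
  ∀ i j k : Fin p, i ∈ pa j → j ∈ pa k → i ∈ pa k

/-- The DAG is perfect: any two distinct parents of a common vertex are adjacent. -/
def DagPerfect {p : ℕ} (pa : Fin p → Finset (Fin p)) : Prop :=
  ∀ k j j' : Fin p, j ∈ pa k → j' ∈ pa k → j ≠ j' → (j ∈ pa j' ∨ j' ∈ pa j)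

/-- Any two distinct children of a common vertex are adjacent
(no induced subgraph `j ← i → k`). -/
def ChildrenAdjacent {p : ℕ} (pa : Fin p → Finset (Fin p)) : Prop :=
  ∀ i j k : Fin p, i ∈ pa j → i ∈ pa k → j ≠ k → (j ∈ pa k ∨ k ∈ pa j)

/-- for a homogeneous DAG (of type I or II) and `Σ ∈ PD_𝒟`,
`∏_i det(Σ_{<i>}) = ∏_i (Σ_{ii|<i>})^{ch_i(𝒟)}`. -/
theorem stmt13 {p : ℕ} (hp : 1 ≤ p) (pa : Fin p → Finset (Fin p))
    (hpa : ∀ i : Fin p, ∀ j ∈ pa i, i < j)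
    (hhom : (DagTransitive pa ∧ DagPerfect pa) ∨ (DagTransitive pa ∧ ChildrenAdjacent pa))
    (d : Fin p → ℝ) (hd : ∀ i, 0 < d i)
    (L : Matrix (Fin p) (Fin p) ℝ) (hL1 : ∀ i, L i i = 1)
    (hL0 : ∀ i j : Fin p, j ≠ i → j ∉ pa i → L j i = 0)
    (Sig : Matrix (Fin p) (Fin p) ℝ) (hSig : Sig = (Lᵀ)⁻¹ * Matrix.diagonal d * L⁻¹) :
    ∏ i : Fin p, (sub2 pa Sig i).det =
      ∏ i : Fin p,
        condVar pa Sig i ^ (Finset.univ.filter (fun j : Fin p => i ∈ pa j)).card := by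
  classical
  have htrans : DagTransitive pa := hhom.elim And.left And.left
  -- L is unit lower triangular
  have hLtri : L.BlockTriangular OrderDual.toDual := by
    intro i j h
    exact hL0 j i (fun e => absurd (congrArg OrderDual.toDual e) (ne_of_gt h))
      (fun hm => absurd (hpa j i hm) (by simpa using h.le))
  have hdetL : L.det = 1 := by
    rw [Matrix.det_of_lowerTriangular L hLtri]; simp [hL1]
  have hLunit : IsUnit L.det := by rw [hdetL]; exact isUnit_one
  have hLTunit : IsUnit Lᵀ.det := by rwa [Matrix.det_transpose]
  -- the fundamental identity Lᵀ Σ L = D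
  have hLSL : Lᵀ * Sig * L = Matrix.diagonal d := by
    rw [hSig]
    rw [show Lᵀ * ((Lᵀ)⁻¹ * Matrix.diagonal d * L⁻¹) * L
        = (Lᵀ * (Lᵀ)⁻¹) * Matrix.diagonal d * (L⁻¹ * L) by
      simp only [Matrix.mul_assoc]]
    rw [Matrix.mul_nonsing_inv _ hLTunit, Matrix.nonsing_inv_mul _ hLunit,
      Matrix.one_mul, Matrix.mul_one]
  set M : Matrix (Fin p) (Fin p) ℝ := Sig * L with hMdef
  -- sum restriction helper
  have sumL : ∀ (j : Fin p) (f : Fin p → ℝ),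
      (∑ m, f m * L m j) = f j + ∑ m ∈ pa j, f m * L m j := by
    intro j f
    rw [← Finset.sum_subset (Finset.subset_univ (insert j (pa j)))
      (fun m _ hm => by
        rw [hL0 j m (fun e => hm (by simp [e])) (fun e => hm (by simp [e])), mul_zero])]
    rw [Finset.sum_insert (fun h => lt_irrefl j (hpa j j h)), hL1, mul_one]
  -- entrywise formula for M
  have hM : ∀ j k, M j k = Sig j k + ∑ m ∈ pa k, Sig j m * L m k := by
    intro j k
    rw [hMdef, Matrix.mul_apply, sumL k (fun m => Sig j m)]
  -- recursion from Lᵀ M = D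
  have hentry : ∀ j k, M j k + ∑ m ∈ pa j, L m j * M m k = Matrix.diagonal d j k := by
    intro j k
    have h1 : (Lᵀ * M) j k = Matrix.diagonal d j k := by
      rw [hMdef, ← Matrix.mul_assoc, hLSL]
    rw [Matrix.mul_apply] at h1
    simp only [Matrix.transpose_apply] at h1
    have h2 : (∑ m, M m k * L m j) = M j k + ∑ m ∈ pa j, M m k * L m j :=
      sumL j (fun m => M m k)
    calc M j k + ∑ m ∈ pa j, L m j * M m k
        = M j k + ∑ m ∈ pa j, M m k * L m j := by
          congr 1; exact Finset.sum_congr rfl (fun m _ => mul_comm _ _)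
      _ = ∑ m, M m k * L m j := h2.symm
      _ = ∑ m, L m j * M m k := Finset.sum_congr rfl (fun m _ => mul_comm _ _)
      _ = Matrix.diagonal d j k := h1
  -- M is upper triangular
  have hMlow : ∀ j k : Fin p, k < j → M j k = 0 := by
    suffices h : ∀ n : ℕ, ∀ j : Fin p, p ≤ j.val + n → ∀ k : Fin p, k < j → M j k = 0 by
      intro j k hk; exact h p j (by omega) k hk
    intro n
    induction n with
    | zero => intro j hj; exact absurd hj (by have := j.isLt; omega)
    | succ n ih =>
      intro j hj k hk
      have h0 : ∀ m ∈ pa j, M m k = 0 := fun m hm =>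
        ih m (by have := hpa j m hm; omega) k (lt_trans hk (hpa j m hm))
      have := hentry j k
      rw [Finset.sum_eq_zero (fun m hm => by rw [h0 m hm, mul_zero]), add_zero,
        Matrix.diagonal_apply_ne d (ne_of_gt hk)] at this
      exact this
  -- diagonal of M
  have hMdiag : ∀ k : Fin p, M k k = d k := by
    intro k
    have := hentry k k
    rw [Finset.sum_eq_zero (fun m hm => by rw [hMlow m k (hpa k m hm), mul_zero]),
      add_zero, Matrix.diagonal_apply_eq] at this
    exact this
  -- M restricted: for k ∈ pa i and any j, M j k is a sum over pa i
  have hMres : ∀ (i : Fin p) (j : Fin p) (k : Fin p), k ∈ pa i →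
      M j k = ∑ m ∈ pa i, Sig j m * L m k := by
    intro i j k hk
    have hsub : insert k (pa k) ⊆ pa i := by
      intro m hm
      rcases Finset.mem_insert.mp hm with h | h
      · rwa [h]
      · exact htrans m k i h hk
    have hvan : ∀ m, m ∉ insert k (pa k) → Sig j m * L m k = 0 := fun m hm => by
      rw [hL0 k m (fun e => hm (by simp [e])) (fun e => hm (by simp [e])), mul_zero]
    have e1 : (∑ m ∈ insert k (pa k), Sig j m * L m k) = ∑ m ∈ pa i, Sig j m * L m k :=
      Finset.sum_subset hsub (fun m _ hm => hvan m hm)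
    have e2 : (∑ m ∈ insert k (pa k), Sig j m * L m k) = ∑ m, Sig j m * L m k :=
      Finset.sum_subset (Finset.subset_univ _) (fun m _ hm => hvan m hm)
    rw [hMdef, Matrix.mul_apply, ← e2, e1]
  -- key determinant computation
  have hdet : ∀ i : Fin p, (sub2 pa Sig i).det = ∏ j ∈ pa i, d j := by
    intro i
    set LS : Matrix {j // j ∈ pa i} {j // j ∈ pa i} ℝ :=
      L.submatrix (fun j => j.1) (fun j => j.1) with hLS
    set MS : Matrix {j // j ∈ pa i} {j // j ∈ pa i} ℝ :=
      M.submatrix (fun j => j.1) (fun j => j.1) with hMS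
    have hmul : sub2 pa Sig i * LS = MS := by
      ext j k
      rw [Matrix.mul_apply]
      have : (∑ m : {j // j ∈ pa i}, Sig j.1 m.1 * L m.1 k.1)
          = ∑ m ∈ pa i, Sig j.1 m * L m k.1 :=
        Finset.sum_coe_sort (pa i) (fun m => Sig j.1 m * L m k.1)
      rw [hLS, hMS]
      simp only [Matrix.submatrix_apply, sub2]
      rw [this, ← hMres i j.1 k.1 k.2]
    have hdetLS : LS.det = 1 := by
      rw [Matrix.det_of_lowerTriangular LS (fun a b h => hLtri (by exact_mod_cast h))]
      simp [hLS, hL1]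
    have hdetMS : MS.det = ∏ j ∈ pa i, d j := by
      rw [Matrix.det_of_upperTriangular
        (show MS.BlockTriangular id from fun a b h => hMlow a.1 b.1 (by exact_mod_cast h))]
      rw [show (∏ a : {j // j ∈ pa i}, MS a a) = ∏ a : {j // j ∈ pa i}, d a.1 by
        exact Finset.prod_congr rfl (fun a _ => hMdiag a.1)]
      exact Finset.prod_coe_sort _ _
    have := congrArg Matrix.det hmul
    rwa [Matrix.det_mul, hdetLS, mul_one, hdetMS] at this
  -- conditional variance equals d i
  have hcv : ∀ i : Fin p, condVar pa Sig i = d i := by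
    intro i
    have hdpos : (sub2 pa Sig i).det ≠ 0 := by
      rw [hdet i]
      exact ne_of_gt (Finset.prod_pos (fun j _ => hd j))
    have hunit : IsUnit (sub2 pa Sig i).det := isUnit_iff_ne_zero.mpr hdpos
    set v : {j // j ∈ pa i} → ℝ := fun m => L m.1 i with hv
    have hlin : sub2 pa Sig i *ᵥ v = fun j => - Sig j.1 i := by
      funext j
      have hj : j.1 ∈ pa i := j.2
      have h0 : M j.1 i = 0 := hMlow j.1 i (hpa i j.1 hj)
      rw [hM j.1 i] at h0
      have : (∑ m ∈ pa i, Sig j.1 m * L m i) = - Sig j.1 i := by linarith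
      calc (sub2 pa Sig i *ᵥ v) j
          = ∑ m : {x // x ∈ pa i}, Sig j.1 m.1 * L m.1 i := by
            rw [Matrix.mulVec]; rfl
        _ = ∑ m ∈ pa i, Sig j.1 m * L m i :=
            Finset.sum_coe_sort (pa i) (fun m => Sig j.1 m * L m i)
        _ = - Sig j.1 i := this
    have hcol : colv pa Sig i = -(sub2 pa Sig i *ᵥ v) := by
      funext j; rw [hlin]; simp [colv]
    have hinv : (sub2 pa Sig i)⁻¹ *ᵥ colv pa Sig i = -v := by
      rw [hcol, Matrix.mulVec_neg, Matrix.mulVec_mulVec,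
        Matrix.nonsing_inv_mul _ hunit, Matrix.one_mulVec]
    rw [condVar, hinv]
    have : rowv pa Sig i ⬝ᵥ (-v) = - ∑ m ∈ pa i, Sig i m * L m i := by
      rw [dotProduct_neg]
      congr 1
      calc rowv pa Sig i ⬝ᵥ v = ∑ m : {x // x ∈ pa i}, Sig i m.1 * L m.1 i := rfl
        _ = ∑ m ∈ pa i, Sig i m * L m i :=
            Finset.sum_coe_sort (pa i) (fun m => Sig i m * L m i)
    rw [this, sub_neg_eq_add, ← hM i i, hMdiag i]
  -- put everything together, with double counting
  calc ∏ i : Fin p, (sub2 pa Sig i).det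
      = ∏ i : Fin p, ∏ j ∈ pa i, d j := Finset.prod_congr rfl (fun i _ => hdet i)
    _ = ∏ j : Fin p, ∏ i ∈ Finset.univ.filter (fun i => j ∈ pa i), d j := by
        refine Finset.prod_comm' (fun x y => ?_)
        simp [Finset.mem_filter]
    _ = ∏ j : Fin p, d j ^ (Finset.univ.filter (fun i : Fin p => j ∈ pa i)).card := by
        refine Finset.prod_congr rfl (fun j _ => ?_)
        rw [Finset.prod_const]
    _ = ∏ i : Fin p,
        condVar pa Sig i ^ (Finset.univ.filter (fun j : Fin p => i ∈ pa j)).card := by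
        refine Finset.prod_congr rfl (fun i _ => ?_)
        rw [hcv i]

end
end

section
/- Suppose the DAG 𝒟 is homogeneous of type II and its undirected version is connected, i.e., the undirected graph on {1,…,p} with i ~ j iff i ∈ pa(j) or j ∈ pa(i) is connected. Then fa(1) = {1,…,p}; that is, every vertex j with 2 ≤ j ≤ p is a parent of the smallest vertex 1. -/
noncomputable section

/-- The undirected version of the DAG `𝒟`. -/
def ugraph {p : ℕ} (pa : Fin p → Finset (Fin p)) : SimpleGraph (Fin p) where
  Adj i j := i ≠ j ∧ (i ∈ pa j ∨ j ∈ pa i)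
  symm := ⟨fun i j h => ⟨h.1.symm, h.2.symm⟩⟩
  loopless := ⟨fun i h => h.1 rfl⟩

/-! A childless vertex `r` of a homogeneous DAG of type II has all of its connected component
as its family: a neighbour `u` of a member `v` of `fa(r)` is either a parent of `v`, hence of `r`
by transitivity, or a child of `v`; in the latter case `v` has the two children `r` and `u`, which
must be adjacent, and since `r` has no children, `u` is a parent of `r`. In parent ordering the
vertex `1` is childless, since parents carry larger labels than their children. -/

theorem SimpleGraph.Reachable.mem_of_adj_closed {V : Type*} {G : SimpleGraph V} {S : Set V}
    (hS : ∀ ⦃x y⦄, G.Adj x y → x ∈ S → y ∈ S) {u v : V} (huv : G.Reachable u v) (hu : u ∈ S) :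
    v ∈ S := by
  rw [SimpleGraph.reachable_iff_reflTransGen] at huv
  induction huv with
  | refl => exact hu
  | tail _ hadj ih => exact hS hadj ih

section

variable {p : ℕ} {pa : Fin p → Finset (Fin p)}

theorem eq_or_mem_pa_of_adj_of_childless (htr : DagTransitive pa) (hch : ChildrenAdjacent pa)
    {r : Fin p} (hr : ∀ v, r ∉ pa v) {u v : Fin p} (hvu : (ugraph pa).Adj v u)
    (hv : v = r ∨ v ∈ pa r) : u = r ∨ u ∈ pa r := by
  obtain ⟨-, hu_pa_v | hv_pa_u⟩ := hvu.symm
  · rcases hv with rfl | hv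
    · exact .inr hu_pa_v
    · exact .inr (htr u v r hu_pa_v hv)
  · rcases hv with rfl | hv
    · exact absurd hv_pa_u (hr u)
    · by_cases hur : u = r
      · exact .inl hur
      · exact .inr ((hch v r u hv hv_pa_u (Ne.symm hur)).resolve_left (hr u))

theorem mem_pa_of_reachable_of_childless (htr : DagTransitive pa) (hch : ChildrenAdjacent pa)
    {r u : Fin p} (hr : ∀ v, r ∉ pa v) (hru : (ugraph pa).Reachable r u) (hne : u ≠ r) :
    u ∈ pa r :=
  have hfa : u = r ∨ u ∈ pa r :=
    hru.mem_of_adj_closed (S := {v | v = r ∨ v ∈ pa r})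
      (fun _ _ hadj hv => eq_or_mem_pa_of_adj_of_childless htr hch hr hadj hv) (.inl rfl)
  hfa.resolve_left hne

end

/-- if the DAG is homogeneous of type II and its undirected version is
connected, then every other vertex is a parent of the smallest vertex `1` (here `0 : Fin p`),
i.e. `fa(1) = {1,…,p}`. -/
theorem stmt15 {p : ℕ} (hp : 1 ≤ p) (pa : Fin p → Finset (Fin p))
    (hpa : ∀ i : Fin p, ∀ j ∈ pa i, i < j)
    (htr : DagTransitive pa) (hch : ChildrenAdjacent pa)
    (hconn : (ugraph pa).Connected) :
    ∀ j : Fin p, j ≠ ⟨0, by omega⟩ → j ∈ pa ⟨0, by omega⟩ := by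
  have hchildless : ∀ v : Fin p, (⟨0, by omega⟩ : Fin p) ∉ pa v := fun v h0 =>
    Nat.not_lt_zero _ (hpa v _ h0)
  exact fun j hj => mem_pa_of_reachable_of_childless htr hch hchildless (hconn _ _) hj

end
end

section
/- Suppose the DAG 𝒟 is perfect, i.e., any two distinct parents of a common vertex are adjacent. Then for every L ∈ ℒ_𝒟 and every p×p diagonal matrix D with nonzero diagonal entries, (L D^{-1} Lᵀ)_{ij} = 0 for all distinct vertices i, j with i ∉ pa(j) and j ∉ pa(i); that is, every matrix in P_𝒟 = {L D^{-1} Lᵀ : (D, L) ∈ Θ_𝒟} is supported on the edges of 𝒟 itself. -/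
open Matrix

noncomputable section

/-- if the DAG is perfect, then every precision matrix `Ω = L D⁻¹ Lᵀ ∈ P_𝒟`
vanishes at positions of distinct non-adjacent vertices of `𝒟` itself. -/
theorem stmt17 {p : ℕ} (hp : 1 ≤ p) (pa : Fin p → Finset (Fin p))
    (hpa : ∀ i : Fin p, ∀ j ∈ pa i, i < j)
    (hperf : DagPerfect pa)
    (L : Matrix (Fin p) (Fin p) ℝ) (hL1 : ∀ i, L i i = 1)
    (hL0 : ∀ i j : Fin p, j ≠ i → j ∉ pa i → L j i = 0)
    (d : Fin p → ℝ) (hd : ∀ i, d i ≠ 0) :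
    ∀ i j : Fin p, i ≠ j → i ∉ pa j → j ∉ pa i →
      (L * Matrix.diagonal (fun k => (d k)⁻¹) * Lᵀ) i j = 0 := by
  intro i j hij hipj hjpi
  rw [Matrix.mul_assoc, Matrix.mul_apply]
  apply Finset.sum_eq_zero
  intro k _
  rw [Matrix.diagonal_mul, Matrix.transpose_apply]
  -- term: L i k * ((d k)⁻¹ * L j k)
  by_cases hik : i = k
  · subst hik
    have : L j i = 0 := hL0 i j hij.symm hjpi
    simp [this]
  · by_cases hjk : j = k
    · subst hjk
      have : L i j = 0 := hL0 j i hij hipj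
      simp [this]
    · by_cases hiPk : i ∈ pa k
      · by_cases hjPk : j ∈ pa k
        · rcases hperf k i j hiPk hjPk hij with h | h
          · exact absurd h hipj
          · exact absurd h hjpi
        · have : L j k = 0 := hL0 k j hjk hjPk
          simp [this]
      · have : L i k = 0 := hL0 k i hik hiPk
        simp [this]

end
end

section
/- Every ℝ-linear subspace W of the space of real symmetric p×p matrices that contains P_𝒟 = {L D^{-1} Lᵀ : (D, L) ∈ Θ_𝒟} also contains Z_{𝒟^m}; consequently, the linear span of P_𝒟 equals Z_{𝒟^m}. -/
open Matrix

noncomputable section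

/-- Adjacency in the moral graph `𝒟^m` of the DAG `𝒟` (for distinct vertices). -/
def MoralAdj {p : ℕ} (pa : Fin p → Finset (Fin p)) (i j : Fin p) : Prop :=
  i ∈ pa j ∨ j ∈ pa i ∨ ∃ k : Fin p, i ∈ pa k ∧ j ∈ pa k

/-- The space of precision matrices `P_𝒟 = {L D⁻¹ Lᵀ : (D, L) ∈ Θ_𝒟}`. -/
def precisionSet {p : ℕ} (pa : Fin p → Finset (Fin p)) : Set (Matrix (Fin p) (Fin p) ℝ) :=
  {Ω | ∃ (d : Fin p → ℝ) (L : Matrix (Fin p) (Fin p) ℝ),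
    (∀ i, 0 < d i) ∧ (∀ i, L i i = 1) ∧ (∀ i j : Fin p, j ≠ i → j ∉ pa i → L j i = 0) ∧
    Ω = L * Matrix.diagonal (fun i => (d i)⁻¹) * Lᵀ}

/-- `Z_{𝒟^m}`: the linear space of symmetric matrices supported on the moral graph. -/
def moralSpace {p : ℕ} (pa : Fin p → Finset (Fin p)) :
    Submodule ℝ (Matrix (Fin p) (Fin p) ℝ) where
  carrier := {A | A.IsSymm ∧ ∀ i j : Fin p, i ≠ j → ¬ MoralAdj pa i j → A i j = 0}
  add_mem' := by
    rintro A B ⟨hA, hA0⟩ ⟨hB, hB0⟩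
    exact ⟨hA.add hB, fun i j h1 h2 => by
      simp [Matrix.add_apply, hA0 i j h1 h2, hB0 i j h1 h2]⟩
  zero_mem' := ⟨Matrix.isSymm_zero, fun i j _ _ => rfl⟩
  smul_mem' := by
    rintro c A ⟨hA, hA0⟩
    refine ⟨?_, fun i j h1 h2 => by simp [Matrix.smul_apply, hA0 i j h1 h2]⟩
    unfold Matrix.IsSymm at hA ⊢
    rw [Matrix.transpose_smul, hA]

namespace Stmt18Aux

variable {p : ℕ} (pa : Fin p → Finset (Fin p))

local notation "E" => fun (i j : Fin p) => Matrix.single i j (1 : ℝ)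

lemma E_transpose (i j : Fin p) :
    (Matrix.single i j (1 : ℝ))ᵀ = Matrix.single j i (1 : ℝ) := by
  ext a b
  simp [Matrix.single, and_comm]

lemma one_mem : (1 : Matrix (Fin p) (Fin p) ℝ) ∈ precisionSet pa := by
  refine ⟨fun _ => 1, 1, fun _ => one_pos, fun i => by simp [Matrix.one_apply],
    fun i j h _ => by simp [Matrix.one_apply, h], ?_⟩
  simp

lemma diagPlus_mem (i : Fin p) :
    Matrix.diagonal (fun j => if j = i then (2 : ℝ) else 1) ∈ precisionSet pa := by
  refine ⟨fun j => if j = i then (1/2 : ℝ) else 1, 1,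
    fun j => by dsimp only; split_ifs <;> norm_num, fun j => by simp [Matrix.one_apply],
    fun a b h _ => by simp [Matrix.one_apply, h], ?_⟩
  have : (fun j => ((if j = i then (1/2 : ℝ) else 1))⁻¹) = fun j => if j = i then (2:ℝ) else 1 := by
    funext j; split_ifs <;> norm_num
  simp only [Matrix.transpose_one, Matrix.mul_one, Matrix.one_mul, this]

lemma Eii_mem (i : Fin p) :
    Matrix.single i i (1 : ℝ) ∈ Submodule.span ℝ (precisionSet pa) := by
  have h : Matrix.single i i (1 : ℝ)
      = Matrix.diagonal (fun j => if j = i then (2 : ℝ) else 1) - 1 := by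
    ext a b
    by_cases hab : a = b
    · subst hab
      rcases eq_or_ne a i with rfl | hi
      · simp [Matrix.single, Matrix.one_apply]; norm_num
      · simp [Matrix.single, Matrix.one_apply, hi, Ne.symm hi]
    · have hni : ¬ (i = a ∧ i = b) := by rintro ⟨rfl, rfl⟩; exact hab rfl
      simp [Matrix.single, Matrix.one_apply_ne hab, Matrix.diagonal_apply_ne _ hab, hni]
  rw [h]
  exact sub_mem (Submodule.subset_span (R := ℝ) (diagPlus_mem pa i))
    (Submodule.subset_span (one_mem pa))

/-- L L^T for L = 1 + E b a, with b ∈ pa a. -/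
lemma edgeA_mem (hpa : ∀ i : Fin p, ∀ j ∈ pa i, i < j) (a b : Fin p) (hb : b ∈ pa a) :
    (1 + Matrix.single a b (1 : ℝ) + Matrix.single b a 1
      + Matrix.single b b 1) ∈ precisionSet pa := by
  have hab : a ≠ b := (hpa a b hb).ne
  refine ⟨fun _ => 1, 1 + Matrix.single b a 1, fun _ => one_pos, ?_, ?_, ?_⟩
  · intro i
    simp only [Matrix.add_apply, Matrix.one_apply_eq, Matrix.single]
    have : ¬ (b = i ∧ a = i) := by rintro ⟨rfl, rfl⟩; exact hab rfl
    simp [this]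
  · intro i j hji hj
    simp only [Matrix.add_apply, Matrix.one_apply_ne hji, Matrix.single]
    have : ¬ (b = j ∧ a = i) := by rintro ⟨rfl, rfl⟩; exact hj hb
    simp [this]
  · have hD : Matrix.diagonal (fun _ : Fin p => ((1 : ℝ))⁻¹) = 1 := by simp
    rw [hD, Matrix.mul_one]
    simp only [Matrix.transpose_add, Matrix.transpose_one, E_transpose, Matrix.mul_add,
      Matrix.add_mul, Matrix.one_mul, Matrix.mul_one, Matrix.single_mul_single_same, mul_one]
    abel

lemma edgeA_span (hpa : ∀ i : Fin p, ∀ j ∈ pa i, i < j) (a b : Fin p) (hb : b ∈ pa a) :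
    (Matrix.single a b (1 : ℝ) + Matrix.single b a 1)
      ∈ Submodule.span ℝ (precisionSet pa) := by
  have h := Submodule.subset_span (R := ℝ) (edgeA_mem pa hpa a b hb)
  have h1 := Submodule.subset_span (R := ℝ) (s := precisionSet pa) (one_mem pa)
  have h2 := Eii_mem pa b
  have : Matrix.single a b (1 : ℝ) + Matrix.single b a 1
      = (1 + Matrix.single a b (1 : ℝ) + Matrix.single b a 1
        + Matrix.single b b 1) - 1 - Matrix.single b b 1 := by abel
  rw [this]
  exact sub_mem (sub_mem h h1) h2

lemma edgeB_mem (hpa : ∀ i : Fin p, ∀ j ∈ pa i, i < j) (a b k : Fin p) (ha : a ∈ pa k) (hb : b ∈ pa k) :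
    (1 + (Matrix.single a k (1 : ℝ) + Matrix.single b k 1)
      + (Matrix.single k a 1 + Matrix.single k b 1)
      + (Matrix.single a a 1 + Matrix.single a b 1
        + Matrix.single b a 1 + Matrix.single b b 1)) ∈ precisionSet pa := by
  have hka : k ≠ a := (hpa k a ha).ne
  have hkb : k ≠ b := (hpa k b hb).ne
  refine ⟨fun _ => 1,
    1 + (Matrix.single a k 1 + Matrix.single b k 1), fun _ => one_pos, ?_, ?_, ?_⟩
  · intro i
    simp only [Matrix.add_apply, Matrix.one_apply_eq, Matrix.single]
    have h1 : ¬ (a = i ∧ k = i) := by rintro ⟨rfl, rfl⟩; exact hka rfl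
    have h2 : ¬ (b = i ∧ k = i) := by rintro ⟨rfl, rfl⟩; exact hkb rfl
    simp [h1, h2]
  · intro i j hji hj
    simp only [Matrix.add_apply, Matrix.one_apply_ne hji, Matrix.single]
    have h1 : ¬ (a = j ∧ k = i) := by rintro ⟨rfl, rfl⟩; exact hj ha
    have h2 : ¬ (b = j ∧ k = i) := by rintro ⟨rfl, rfl⟩; exact hj hb
    simp [h1, h2]
  · have hD : Matrix.diagonal (fun _ : Fin p => ((1 : ℝ))⁻¹) = 1 := by simp
    rw [hD, Matrix.mul_one]
    simp only [Matrix.transpose_add, Matrix.transpose_one, E_transpose, Matrix.mul_add,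
      Matrix.add_mul, Matrix.one_mul, Matrix.mul_one, Matrix.single_mul_single_same, mul_one]
    abel

lemma edge_span (hpa : ∀ i : Fin p, ∀ j ∈ pa i, i < j) (i j : Fin p) (hij : i ≠ j) (hadj : MoralAdj pa i j) :
    (Matrix.single i j (1 : ℝ) + Matrix.single j i 1)
      ∈ Submodule.span ℝ (precisionSet pa) := by
  rcases hadj with h | h | ⟨k, hik, hjk⟩
  · have := edgeA_span pa hpa j i h
    rwa [add_comm] at this
  · exact edgeA_span pa hpa i j h
  · have hB := Submodule.subset_span (R := ℝ) (edgeB_mem pa hpa i j k hik hjk)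
    have hA1 := Submodule.subset_span (R := ℝ) (edgeA_mem pa hpa k i hik)
    have hA2 := Submodule.subset_span (R := ℝ) (edgeA_mem pa hpa k j hjk)
    have h1 := Submodule.subset_span (R := ℝ) (s := precisionSet pa) (one_mem pa)
    have hEq : Matrix.single i j (1 : ℝ) + Matrix.single j i 1
        = (1 + (Matrix.single i k (1 : ℝ) + Matrix.single j k 1)
            + (Matrix.single k i 1 + Matrix.single k j 1)
            + (Matrix.single i i 1 + Matrix.single i j 1
              + Matrix.single j i 1 + Matrix.single j j 1))
          - (1 + Matrix.single k i (1 : ℝ) + Matrix.single i k 1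
              + Matrix.single i i 1)
          - (1 + Matrix.single k j (1 : ℝ) + Matrix.single j k 1
              + Matrix.single j j 1)
          + 1 := by abel
    rw [hEq]
    exact add_mem (sub_mem (sub_mem hB hA1) hA2) h1

lemma precision_subset : precisionSet pa ⊆ (moralSpace pa : Set (Matrix (Fin p) (Fin p) ℝ)) := by
  rintro Ω ⟨d, L, hd, hL1, hL0, rfl⟩
  constructor
  · unfold Matrix.IsSymm
    simp [Matrix.transpose_mul, Matrix.diagonal_transpose, Matrix.mul_assoc]
  · intro i j hij hadj
    rw [Matrix.mul_apply]
    apply Finset.sum_eq_zero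
    intro k _
    rw [Matrix.mul_diagonal, Matrix.transpose_apply]
    rcases eq_or_ne i k with rfl | hik
    · have h0 : L j i = 0 := hL0 i j (Ne.symm hij) (fun h => hadj (Or.inr (Or.inl h)))
      simp [h0]
    · rcases eq_or_ne j k with rfl | hjk
      · have h0 : L i j = 0 := hL0 j i hij (fun h => hadj (Or.inl h))
        simp [h0]
      · by_cases hik2 : i ∈ pa k
        · by_cases hjk2 : j ∈ pa k
          · exact absurd (Or.inr (Or.inr ⟨k, hik2, hjk2⟩)) hadj
          · simp [hL0 k j hjk hjk2]
        · simp [hL0 k i hik hik2]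

lemma moral_le_span (hpa : ∀ i : Fin p, ∀ j ∈ pa i, i < j) :
    moralSpace pa ≤ Submodule.span ℝ (precisionSet pa) := by
  rintro A ⟨hsym, hz⟩
  have hA : A = ∑ i : Fin p, ∑ j : Fin p,
      (A i j / 2) • (Matrix.single i j (1 : ℝ) + Matrix.single j i 1) := by
    have hswap : ∑ i : Fin p, ∑ j : Fin p, (A i j / 2) • Matrix.single j i (1 : ℝ)
        = ∑ i : Fin p, ∑ j : Fin p, (A i j / 2) • Matrix.single i j (1 : ℝ) := by
      rw [Finset.sum_comm]
      refine Finset.sum_congr rfl fun i _ => Finset.sum_congr rfl fun j _ => ?_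
      rw [show A j i = A i j from hsym.apply i j]
    have hterm : ∀ i j : Fin p, (A i j / 2) • Matrix.single i j (1 : ℝ)
        + (A i j / 2) • Matrix.single i j (1 : ℝ)
        = Matrix.single i j (A i j) := by
      intro i j
      rw [← add_smul, smul_single, smul_eq_mul, mul_one]
      congr 1
      ring
    calc A = ∑ i : Fin p, ∑ j : Fin p, Matrix.single i j (A i j) :=
          matrix_eq_sum_single A
      _ = ∑ i : Fin p, ∑ j : Fin p, ((A i j / 2) • Matrix.single i j (1 : ℝ)
            + (A i j / 2) • Matrix.single i j (1 : ℝ)) :=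
          Finset.sum_congr rfl fun i _ => Finset.sum_congr rfl fun j _ => (hterm i j).symm
      _ = (∑ i : Fin p, ∑ j : Fin p, (A i j / 2) • Matrix.single i j (1 : ℝ))
            + ∑ i : Fin p, ∑ j : Fin p, (A i j / 2) • Matrix.single i j (1 : ℝ) := by
          simp only [Finset.sum_add_distrib]
      _ = (∑ i : Fin p, ∑ j : Fin p, (A i j / 2) • Matrix.single i j (1 : ℝ))
            + ∑ i : Fin p, ∑ j : Fin p, (A i j / 2) • Matrix.single j i (1 : ℝ) := by
          rw [hswap]
      _ = ∑ i : Fin p, ∑ j : Fin p,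
            (A i j / 2) • (Matrix.single i j (1 : ℝ) + Matrix.single j i 1) := by
          simp only [smul_add, Finset.sum_add_distrib]
  rw [hA]
  refine Submodule.sum_mem _ fun i _ => Submodule.sum_mem _ fun j _ => ?_
  rcases eq_or_ne i j with rfl | hij
  · have : Matrix.single i i (1 : ℝ) + Matrix.single i i 1
        = (2 : ℝ) • Matrix.single i i (1 : ℝ) := by rw [two_smul]
    rw [this]
    exact Submodule.smul_mem _ _ (Submodule.smul_mem _ _ (Eii_mem pa i))
  · by_cases hadj : MoralAdj pa i j
    · exact Submodule.smul_mem _ _ (edge_span pa hpa i j hij hadj)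
    · rw [hz i j hij hadj]
      simp

end Stmt18Aux

/-- every linear subspace of the symmetric matrices containing `P_𝒟`
contains `Z_{𝒟^m}`; consequently the linear span of `P_𝒟` is `Z_{𝒟^m}`. -/
theorem stmt18 {p : ℕ} (hp : 1 ≤ p) (pa : Fin p → Finset (Fin p))
    (hpa : ∀ i : Fin p, ∀ j ∈ pa i, i < j) :
    (∀ W : Submodule ℝ (Matrix (Fin p) (Fin p) ℝ), (∀ A ∈ W, A.IsSymm) →
      precisionSet pa ⊆ ↑W → (moralSpace pa : Set (Matrix (Fin p) (Fin p) ℝ)) ⊆ ↑W) ∧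
    Submodule.span ℝ (precisionSet pa) = moralSpace pa := by
  have hspan : Submodule.span ℝ (precisionSet pa) = moralSpace pa := by
    refine le_antisymm ?_ (Stmt18Aux.moral_le_span pa hpa)
    rw [Submodule.span_le]
    exact Stmt18Aux.precision_subset pa
  refine ⟨fun W _ hW => ?_, hspan⟩
  rw [← hspan]
  exact (Submodule.span_le.mpr hW : Submodule.span ℝ (precisionSet pa) ≤ W)

end
end

section
/- Suppose the DAG 𝒟 is not perfect, i.e., some vertex has two distinct parents that are not adjacent. Let E^m = {(j, i) : j > i, j and i adjacent in the moral graph 𝒟^m} ∪ {(i, i) : 1 ≤ i ≤ p}. Then the image of Θ_𝒟 under the map (D, L) ↦ ((L D^{-1} Lᵀ)_{ji})_{(j,i) ∈ E^m} is a Lebesgue-null subset of ℝ^{E^m}; i.e., the space of precision matrices P_𝒟, viewed through its moral-graph coordinates, has Lebesgue measure zero. -/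
open MeasureTheory Matrix

noncomputable section

/-- The index set `E^m`: loops `(i,i)` together with pairs `(j,i)`, `j > i`, adjacent in
the moral graph. -/
def EmT {p : ℕ} (pa : Fin p → Finset (Fin p)) : Type :=
  {q : Fin p × Fin p // q.1 = q.2 ∨ (q.2 < q.1 ∧ MoralAdj pa q.1 q.2)}

instance {p : ℕ} (pa : Fin p → Finset (Fin p)) : Fintype (EmT pa) := by
  classical exact (Subtype.fintype _)

/-!
The free parameters of `Θ_𝒟` are the `p` diagonal entries and one entry per arrow `j → i`;
sending them to the moral coordinates `(i, i)` and `(j, i)` is injective, and two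
non-adjacent parents of a common child give a moral edge that is not hit. So the moral
coordinates of `L D⁻¹ Lᵀ` are a differentiable function of strictly fewer variables than
there are coordinates, and the image of a differentiable map from a space of smaller
dimension is Lebesgue-null: precomposing it with a linear surjection yields a self-map whose
derivative is everywhere singular.
-/

open Module

theorem LinearMap.exists_surjective_of_finrank_le {K V W : Type*} [Field K] [AddCommGroup V]
    [Module K V] [FiniteDimensional K V] [AddCommGroup W] [Module K W] [FiniteDimensional K W]
    (h : finrank K V ≤ finrank K W) : ∃ π : W →ₗ[K] V, Function.Surjective π := by
  let eV := LinearEquiv.ofFinrankEq V (Fin (finrank K V) → K) (finrank_fin_fun K).symm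
  let eW := LinearEquiv.ofFinrankEq W (Fin (finrank K W) → K) (finrank_fin_fun K).symm
  refine ⟨eV.symm.toLinearMap ∘ₗ LinearMap.funLeft K K (Fin.castLE h) ∘ₗ eW.toLinearMap, ?_⟩
  simpa using (LinearMap.funLeft_surjective_of_injective K K _ (Fin.castLE_injective h)).comp
    eW.surjective

theorem MeasureTheory.addHaar_image_eq_zero_of_finrank_lt {E F : Type*} [NormedAddCommGroup E]
    [NormedSpace ℝ E] [FiniteDimensional ℝ E] [NormedAddCommGroup F] [NormedSpace ℝ F]
    [FiniteDimensional ℝ F] [MeasurableSpace F] [BorelSpace F] (μ : Measure F)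
    [μ.IsAddHaarMeasure] {f : E → F} {s : Set E} (hf : DifferentiableOn ℝ f s)
    (hEF : finrank ℝ E < finrank ℝ F) : μ (f '' s) = 0 := by
  obtain ⟨π, hπ⟩ := LinearMap.exists_surjective_of_finrank_le hEF.le
  let πL : F →L[ℝ] E := π.toContinuousLinearMap
  have hker : LinearMap.ker π ≠ ⊥ := fun h =>
    hEF.not_ge (LinearMap.finrank_le_finrank_of_injective (LinearMap.ker_eq_bot.mp h))
  rw [← Set.image_preimage_eq s hπ, Set.image_image]
  refine addHaar_image_eq_zero_of_det_fderivWithin_eq_zero μ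
    (f' := fun y => (fderivWithin ℝ f s (π y)).comp πL) (fun y hy => ?_) (fun y _ => ?_)
  · exact (hf _ hy).hasFDerivWithinAt.comp y πL.hasFDerivWithinAt (Set.mapsTo_preimage _ _)
  · refine LinearMap.det_eq_zero_iff_ker_ne_bot.mpr (ne_bot_of_le_ne_bot hker ?_)
    exact LinearMap.ker_le_ker_comp _ _

section
variable {p : ℕ} (pa : Fin p → Finset (Fin p))

def precisionCoords (x : (Fin p → ℝ) × (Edges pa → ℝ)) (e : EmT pa) : ℝ :=
  (mkL pa x.2 * diagonal (fun i => (x.1 i)⁻¹) * (mkL pa x.2)ᵀ) e.1.1 e.1.2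

@[fun_prop]
theorem differentiable_mkL_apply (a b : Fin p) :
    Differentiable ℝ fun y : Edges pa → ℝ => mkL pa y a b := by
  unfold mkL
  simp only [of_apply]
  split_ifs <;> fun_prop

theorem differentiableOn_precisionCoords :
    DifferentiableOn ℝ (precisionCoords pa) (thetaSet pa) := by
  refine differentiableOn_pi.2 fun e x hx => ?_
  simp only [precisionCoords, mul_apply, diagonal_apply, transpose_apply, mul_ite, mul_zero,
    Finset.sum_ite_eq', Finset.mem_univ, if_true]
  exact DifferentiableAt.differentiableWithinAt (by fun_prop (disch := exact (hx _).ne'))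

def paramIndex (hpa : ∀ i : Fin p, ∀ j ∈ pa i, i < j) : Fin p ⊕ Edges pa → EmT pa
  | .inl i => ⟨(i, i), .inl rfl⟩
  | .inr e => ⟨(e.2.1, e.1), .inr ⟨hpa _ _ e.2.2, .inl e.2.2⟩⟩

variable {pa}

theorem paramIndex_injective (hpa : ∀ i : Fin p, ∀ j ∈ pa i, i < j) :
    Function.Injective (paramIndex pa hpa) := by
  rintro (i | ⟨i, j, hj⟩) (i' | ⟨i', j', hj'⟩) h <;>
    replace h := congrArg Subtype.val h <;> simp only [paramIndex, Prod.mk.injEq] at h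
  · rw [h.1]
  · obtain ⟨rfl, rfl⟩ := h
    exact absurd (hpa _ _ hj') (lt_irrefl _)
  · obtain ⟨rfl, rfl⟩ := h
    exact absurd (hpa _ _ hj) (lt_irrefl _)
  · obtain ⟨rfl, rfl⟩ := h
    rfl

theorem paramIndex_not_surjective (hpa : ∀ i : Fin p, ∀ j ∈ pa i, i < j)
    (hnp : ∃ k j j' : Fin p, j ∈ pa k ∧ j' ∈ pa k ∧ j ≠ j' ∧ j ∉ pa j' ∧ j' ∉ pa j) :
    ¬ Function.Surjective (paramIndex pa hpa) := by
  obtain ⟨k, j, j', hj, hj', hne, hjj', hj'j⟩ := hnp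
  have key : ∀ a b, a ∈ pa k → b ∈ pa k → b < a → a ∉ pa b →
      ¬ Function.Surjective (paramIndex pa hpa) := by
    intro a b ha hb hba hab hsurj
    obtain ⟨i | ⟨i, c, hc⟩, h⟩ := hsurj ⟨(a, b), .inr ⟨hba, .inr (.inr ⟨k, ha, hb⟩)⟩⟩ <;>
      replace h := congrArg Subtype.val h <;> simp only [paramIndex, Prod.mk.injEq] at h
    · obtain ⟨rfl, rfl⟩ := h
      exact lt_irrefl _ hba
    · obtain ⟨rfl, rfl⟩ := h
      exact hab hc
  rcases hne.lt_or_gt with h | h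
  · exact key j' j hj' hj h hj'j
  · exact key j j' hj hj' h hjj'

theorem finrank_params_lt_finrank_moral (hpa : ∀ i : Fin p, ∀ j ∈ pa i, i < j)
    (hnp : ∃ k j j' : Fin p, j ∈ pa k ∧ j' ∈ pa k ∧ j ≠ j' ∧ j ∉ pa j' ∧ j' ∉ pa j) :
    finrank ℝ ((Fin p → ℝ) × (Edges pa → ℝ)) < finrank ℝ (EmT pa → ℝ) := by
  simpa [finrank_prod, finrank_fintype_fun_eq_card] using
    Fintype.card_lt_of_injective_not_surjective _ (paramIndex_injective hpa)
      (paramIndex_not_surjective hpa hnp)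

end

theorem stmt19_general {p : ℕ} (pa : Fin p → Finset (Fin p))
    (hpa : ∀ i : Fin p, ∀ j ∈ pa i, i < j)
    (hnp : ∃ k j j' : Fin p, j ∈ pa k ∧ j' ∈ pa k ∧ j ≠ j' ∧ j ∉ pa j' ∧ j' ∉ pa j) :
    volume ((fun x : (Fin p → ℝ) × (Edges pa → ℝ) => fun e : EmT pa =>
        (mkL pa x.2 * Matrix.diagonal (fun i => (x.1 i)⁻¹) * (mkL pa x.2)ᵀ) e.1.1 e.1.2) ''
      thetaSet pa) = 0 :=
  addHaar_image_eq_zero_of_finrank_lt volume (differentiableOn_precisionCoords pa)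
    (finrank_params_lt_finrank_moral hpa hnp)

/-- if the DAG `𝒟` is not perfect, then the space of precision matrices
`P_𝒟`, viewed through its moral-graph coordinates `ℝ^{E^m}`, has Lebesgue measure zero. -/
theorem stmt19 {p : ℕ} (hp : 1 ≤ p) (pa : Fin p → Finset (Fin p))
    (hpa : ∀ i : Fin p, ∀ j ∈ pa i, i < j)
    (hnp : ∃ k j j' : Fin p, j ∈ pa k ∧ j' ∈ pa k ∧ j ≠ j' ∧ j ∉ pa j' ∧ j' ∉ pa j) :
    volume ((fun x : (Fin p → ℝ) × (Edges pa → ℝ) => fun e : EmT pa =>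
        (mkL pa x.2 * Matrix.diagonal (fun i => (x.1 i)⁻¹) * (mkL pa x.2)ᵀ) e.1.1 e.1.2) ''
      thetaSet pa) = 0 :=
  stmt19_general pa hpa hnp

end
end
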